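/- arXiv:2404.00689 — 3 statements merged into one kernel-verified Lean document; each statement's English description precedes it below -/
import Mathlib

section
/- Let u : ℝ² → ℝ be a C^∞ function with compact support. Then ∫_{ℝ²} (∂₁₂u)² dx = ∫_{ℝ²} (∂₁₁u)(∂₂₂u) dx. -/
open MeasureTheory

/-- The second-order partial derivative `∂ᵢⱼ u = ∂ⱼ(∂ᵢ u)` of a function on `ℝ²`,
where `∂ᵢ u x = fderiv ℝ u x eᵢ` and `(e₁, e₂)` is the standard basis. -/
noncomputable def secondPartial (i j : Fin 2) (u : EuclideanSpace ℝ (Fin 2) → ℝ) :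
    EuclideanSpace ℝ (Fin 2) → ℝ :=
  fun x =>
    fderiv ℝ (fun y => fderiv ℝ u y (EuclideanSpace.single i 1)) x (EuclideanSpace.single j 1)

namespace SecondPartialAux

local notation "E2" => EuclideanSpace ℝ (Fin 2)

/-- Directional partial derivative in the direction `v`. -/
noncomputable def pd (v : E2) (u : E2 → ℝ) : E2 → ℝ :=
  fun x => fderiv ℝ u x v

lemma pd_contDiff {u : E2 → ℝ} (hu : ContDiff ℝ (⊤ : ℕ∞) u) (v : E2) :
    ContDiff ℝ (⊤ : ℕ∞) (pd v u) :=
  (hu.fderiv_right (by simp)).clm_apply contDiff_const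

lemma pd_hcs {u : E2 → ℝ} (hc : HasCompactSupport u) (v : E2) :
    HasCompactSupport (pd v u) :=
  (hc.fderiv ℝ).comp_left (g := fun L : E2 →L[ℝ] ℝ => L v) rfl

/-- Integration by parts. -/
lemma ibp {f g : E2 → ℝ} (hf : ContDiff ℝ (⊤ : ℕ∞) f) (hg : ContDiff ℝ (⊤ : ℕ∞) g)
    (hcf : HasCompactSupport f) (v : E2) :
    ∫ x, f x * pd v g x = - ∫ x, pd v f x * g x := by
  have h1 : Integrable (fun x => pd v f x * g x) :=
    (((pd_contDiff hf v).continuous).mul hg.continuous).integrable_of_hasCompactSupport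
      ((pd_hcs hcf v).mul_right)
  have h2 : Integrable (fun x => f x * pd v g x) :=
    (hf.continuous.mul ((pd_contDiff hg v).continuous)).integrable_of_hasCompactSupport
      (hcf.mul_right)
  have h3 : Integrable (fun x => f x * g x) :=
    (hf.continuous.mul hg.continuous).integrable_of_hasCompactSupport (hcf.mul_right)
  exact integral_mul_fderiv_eq_neg_fderiv_mul_of_integrable h1 h2 h3
    (fun x _ => hf.differentiable (by simp) x) (fun x _ => hg.differentiable (by simp) x)

lemma pd_eq_snd {u : E2 → ℝ} (hu : ContDiff ℝ (⊤ : ℕ∞) u) (v w : E2) (x : E2) :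
    pd w (pd v u) x = fderiv ℝ (fderiv ℝ u) x w v := by
  have hd : DifferentiableAt ℝ (fderiv ℝ u) x :=
    ((hu.fderiv_right (m := (⊤:ℕ∞)) (by simp)).differentiable (by simp)) x
  have h := ((ContinuousLinearMap.apply ℝ ℝ v).hasFDerivAt.comp x hd.hasFDerivAt).fderiv
  have : pd w (pd v u) x
      = (((ContinuousLinearMap.apply ℝ ℝ v).comp (fderiv ℝ (fderiv ℝ u) x))) w := by
    rw [← h]; rfl
  simpa using this

/-- Schwarz symmetry of partial derivatives. -/
lemma pd_comm {u : E2 → ℝ} (hu : ContDiff ℝ (⊤ : ℕ∞) u) (v w : E2) (x : E2) :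
    pd w (pd v u) x = pd v (pd w u) x := by
  rw [pd_eq_snd hu v w x, pd_eq_snd hu w v x]
  exact (hu.contDiffAt.isSymmSndFDerivAt (by rw [minSmoothness_of_isRCLikeNormedField]; exact WithTop.coe_le_coe.2 (le_top : (2:ℕ∞) ≤ ⊤))).eq w v

end SecondPartialAux

/-- For a smooth compactly supported `u : ℝ² → ℝ`,
`∫ (∂₁₂u)² = ∫ (∂₁₁u)(∂₂₂u)`. -/
theorem integral_mixed_sq_eq_integral_prod (u : EuclideanSpace ℝ (Fin 2) → ℝ)
    (hu : ContDiff ℝ (⊤ : ℕ∞) u) (hc : HasCompactSupport u) :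
    ∫ x, (secondPartial 0 1 u x) ^ 2 =
      ∫ x, (secondPartial 0 0 u x) * (secondPartial 1 1 u x) := by
  open SecondPartialAux in
  set e0 : EuclideanSpace ℝ (Fin 2) := EuclideanSpace.single 0 1 with he0
  set e1 : EuclideanSpace ℝ (Fin 2) := EuclideanSpace.single 1 1 with he1
  have hsp : ∀ i j : Fin 2, secondPartial i j u
      = pd (EuclideanSpace.single j 1) (pd (EuclideanSpace.single i 1) u) := fun i j => rfl
  have hu0 : ContDiff ℝ (⊤ : ℕ∞) (pd e0 u) := pd_contDiff hu e0
  have hu1 : ContDiff ℝ (⊤ : ℕ∞) (pd e1 u) := pd_contDiff hu e1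
  have hc0 : HasCompactSupport (pd e0 u) := pd_hcs hc e0
  have hc1 : HasCompactSupport (pd e1 u) := pd_hcs hc e1
  -- LHS
  have hL : ∫ x, (pd e1 (pd e0 u) x) ^ 2
      = - ∫ x, pd e1 (pd e1 (pd e0 u)) x * pd e0 u x := by
    have := ibp (f := pd e1 (pd e0 u)) (g := pd e0 u)
      (pd_contDiff hu0 e1) hu0 (pd_hcs hc0 e1) e1
    simpa [sq] using this
  have hR : ∫ x, pd e0 (pd e0 u) x * pd e1 (pd e1 u) x
      = - ∫ x, pd e0 (pd e1 (pd e1 u)) x * pd e0 u x := by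
    have := ibp (f := pd e1 (pd e1 u)) (g := pd e0 u)
      (pd_contDiff hu1 e1) hu0 (pd_hcs hc1 e1) e0
    rw [← this]
    congr 1; ext x; rw [mul_comm]
  have hkey : ∀ x, pd e1 (pd e1 (pd e0 u)) x = pd e0 (pd e1 (pd e1 u)) x := by
    intro x
    have h1 : pd e1 (pd e0 u) = pd e0 (pd e1 u) := funext fun y => pd_comm hu e0 e1 y
    rw [h1]
    exact (pd_comm (pd_contDiff hu e1) e1 e0 x).symm
  rw [hsp 0 1, hsp 0 0, hsp 1 1, hL, hR]
  congr 1
  have hfun : (fun x => pd e1 (pd e1 (pd e0 u)) x * pd e0 u x)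
      = fun x => pd e0 (pd e1 (pd e1 u)) x * pd e0 u x := funext fun x => by rw [hkey x]
  rw [hfun]
end

section
/- Let n ≥ 2 and let R₁, R₂ be real n×n matrices with RᵢᵀRᵢ = Id and det Rᵢ = 1. Denote by R̂ᵢ the n×(n−1) matrix consisting of the first n−1 columns of Rᵢ and by Rᵢ⁽ⁿ⁾ ∈ ℝⁿ the last column of Rᵢ. Then ‖R₁⁽ⁿ⁾ − R₂⁽ⁿ⁾‖ ≤ (n−1) ‖R̂₁ − R̂₂‖, and consequently ‖R₁ − R₂‖² ≤ n² ‖R̂₁ − R̂₂‖². -/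
open Matrix Finset

/-- If `det P ≤ 0` then the Frobenius distance from `P` to the identity is at least 1. -/
lemma frob_ge_one_of_det_nonpos {m : ℕ} (P : Matrix (Fin m) (Fin m) ℝ) (hP : P.det ≤ 0) :
    1 ≤ ∑ i, ∑ j, (P i j - (1 : Matrix (Fin m) (Fin m) ℝ) i j) ^ 2 := by
  set f : ℝ → ℝ := fun t => (1 + t • (P - 1)).det with hf
  have hcont : Continuous f := by
    apply Continuous.matrix_det
    exact continuous_const.add (continuous_id.smul continuous_const)
  have hf0 : f 0 = 1 := by simp [hf]
  have hf1 : f 1 = P.det := by simp [hf]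
  have h01 : (0:ℝ) ≤ 1 := zero_le_one
  obtain ⟨t, ht, hft⟩ : ∃ t ∈ Set.Icc (0:ℝ) 1, f t = 0 := by
    have h : (0:ℝ) ∈ Set.Icc (f 1) (f 0) := by rw [hf0, hf1]; exact ⟨hP, zero_le_one⟩
    obtain ⟨t, ht, hft⟩ := intermediate_value_Icc' h01 hcont.continuousOn h
    exact ⟨t, ht, hft⟩
  obtain ⟨v, hv, hMv⟩ : ∃ v, v ≠ 0 ∧ (1 + t • (P - 1)) *ᵥ v = 0 :=
    Matrix.exists_mulVec_eq_zero_iff.mpr hft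
  have hv' : ∀ i, v i = - (t * ((P - 1) *ᵥ v) i) := by
    intro i
    have := congrFun hMv i
    simp [Matrix.add_mulVec, Matrix.one_mulVec, Matrix.smul_mulVec] at this
    linarith [this]
  -- Cauchy-Schwarz per row
  set S := ∑ i, ∑ j, (P i j - (1 : Matrix (Fin m) (Fin m) ℝ) i j) ^ 2 with hS
  have hrow : ∀ i, (((P - 1) *ᵥ v) i) ^ 2 ≤ (∑ j, (P i j - (1 : Matrix (Fin m) (Fin m) ℝ) i j) ^ 2) * ∑ j, (v j) ^ 2 := by
    intro i
    have := Finset.sum_mul_sq_le_sq_mul_sq Finset.univ (fun j => P i j - (1 : Matrix (Fin m) (Fin m) ℝ) i j) v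
    simpa [Matrix.mulVec, dotProduct, Matrix.sub_apply] using this
  have hV : 0 < ∑ j, (v j) ^ 2 := by
    obtain ⟨i, hi⟩ := Function.ne_iff.mp hv
    have hi' : v i ≠ 0 := by simpa using hi
    have : (0:ℝ) < v i ^ 2 := (sq_nonneg (v i)).lt_of_ne (Ne.symm (pow_ne_zero 2 hi'))
    have hle : v i ^ 2 ≤ ∑ j, (v j) ^ 2 :=
      Finset.single_le_sum (fun j _ => sq_nonneg (v j)) (Finset.mem_univ i)
    linarith
  have hmain : ∑ j, (v j) ^ 2 ≤ t ^ 2 * (S * ∑ j, (v j) ^ 2) := by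
    calc ∑ j, (v j) ^ 2 = ∑ i, (- (t * ((P - 1) *ᵥ v) i)) ^ 2 := by
          apply Finset.sum_congr rfl; intro i _; rw [← hv' i]
      _ = t ^ 2 * ∑ i, (((P - 1) *ᵥ v) i) ^ 2 := by
          rw [Finset.mul_sum]; apply Finset.sum_congr rfl; intro i _; ring
      _ ≤ t ^ 2 * ∑ i, (∑ j, (P i j - (1 : Matrix (Fin m) (Fin m) ℝ) i j) ^ 2) * ∑ j, (v j) ^ 2 := by
          apply mul_le_mul_of_nonneg_left _ (sq_nonneg t)
          exact Finset.sum_le_sum fun i _ => hrow i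
      _ = t ^ 2 * (S * ∑ j, (v j) ^ 2) := by rw [hS, ← Finset.sum_mul]
  have ht2 : t ^ 2 ≤ 1 := by
    obtain ⟨h0, h1⟩ := ht; nlinarith
  have hS0 : 0 ≤ S := Finset.sum_nonneg fun i _ => Finset.sum_nonneg fun j _ => sq_nonneg _
  have h2 : t ^ 2 * (S * ∑ j, (v j) ^ 2) ≤ 1 * (S * ∑ j, (v j) ^ 2) :=
    mul_le_mul_of_nonneg_right ht2 (mul_nonneg hS0 hV.le)
  nlinarith [hmain, hV, h2]

lemma sum_sq_mulVec {n : ℕ} (R : Matrix (Fin n) (Fin n) ℝ) (h : Rᵀ * R = 1) (v : Fin n → ℝ) :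
    ∑ i, (R.mulVec v i) ^ 2 = ∑ i, (v i) ^ 2 := by
  have key : (R *ᵥ v) ⬝ᵥ (R *ᵥ v) = v ⬝ᵥ v := by
    have h1 : (R *ᵥ v) ⬝ᵥ (R *ᵥ v) = ((R *ᵥ v) ᵥ* R) ⬝ᵥ v := dotProduct_mulVec _ _ _
    have h2 : (R *ᵥ v) ᵥ* R = Rᵀ *ᵥ (R *ᵥ v) := by
      rw [Matrix.mulVec_transpose]
    rw [h1, h2, Matrix.mulVec_mulVec, h, Matrix.one_mulVec]
  simpa [dotProduct, sq] using key

lemma diag_last_eq_det_submatrix {m : ℕ} (Q : Matrix (Fin (m + 1)) (Fin (m + 1)) ℝ)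
    (hQ : Qᵀ * Q = 1) (hdet : Q.det = 1) :
    Q (Fin.last m) (Fin.last m) = (Q.submatrix Fin.castSucc Fin.castSucc).det := by
  have hadj : Q.adjugate = Qᵀ := by
    have h1 : Q * Q.adjugate = 1 := by rw [Matrix.mul_adjugate, hdet, one_smul]
    calc Q.adjugate = 1 * Q.adjugate := (one_mul _).symm
      _ = (Qᵀ * Q) * Q.adjugate := by rw [hQ]
      _ = Qᵀ * (Q * Q.adjugate) := by rw [mul_assoc]
      _ = Qᵀ := by rw [h1, mul_one]
  have hh := Matrix.adjugate_fin_succ_eq_det_submatrix Q (Fin.last m) (Fin.last m)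
  rw [hadj] at hh
  simp only [Matrix.transpose_apply, Fin.succAbove_last, Fin.val_last] at hh
  rw [hh, show ((-1 : ℝ)) ^ (m + m) = 1 from Even.neg_one_pow ⟨m, rfl⟩, one_mul]
lemma key_ineq {m : ℕ} (hm : 1 ≤ m) (Q : Matrix (Fin (m + 1)) (Fin (m + 1)) ℝ)
    (hQ : Qᵀ * Q = 1) (hdet : Q.det = 1) :
    ∑ i, (Q i (Fin.last m) - (1 : Matrix (Fin (m + 1)) (Fin (m + 1)) ℝ) i (Fin.last m)) ^ 2 ≤
      (m : ℝ) ^ 2 * ∑ i, ∑ j : Fin m,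
        (Q i (Fin.castSucc j) - (1 : Matrix (Fin (m + 1)) (Fin (m + 1)) ℝ) i (Fin.castSucc j)) ^ 2 := by
  have hQQT : Q * Qᵀ = 1 := mul_eq_one_comm.mp hQ
  set l := Fin.last m with hl
  set d := Q l l with hd
  set P := Q.submatrix Fin.castSucc Fin.castSucc with hP
  -- column norm : ∑ i, (Q i l)^2 = 1
  have hcol : ∑ i, (Q i l) ^ 2 = 1 := by
    have h1 : (Qᵀ * Q) l l = (1 : Matrix (Fin (m + 1)) (Fin (m + 1)) ℝ) l l := by rw [hQ]
    simpa [Matrix.mul_apply, Matrix.one_apply, sq] using h1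
  -- row norm : ∑ k, (Q l k)^2 = 1
  have hrow : ∑ k, (Q l k) ^ 2 = 1 := by
    have h1 : (Q * Qᵀ) l l = (1 : Matrix (Fin (m + 1)) (Fin (m + 1)) ℝ) l l := by rw [hQQT]
    simpa [Matrix.mul_apply, Matrix.one_apply, sq] using h1
  -- A = 2 - 2d
  have hA : ∑ i, (Q i l - (1 : Matrix (Fin (m + 1)) (Fin (m + 1)) ℝ) i l) ^ 2 = 2 - 2 * d := by
    have e1 : ∀ i : Fin (m + 1), (Q i l - (1 : Matrix (Fin (m + 1)) (Fin (m + 1)) ℝ) i l) ^ 2 =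
        (Q i l) ^ 2 - 2 * (Q i l * (1 : Matrix (Fin (m + 1)) (Fin (m + 1)) ℝ) i l)
          + ((1 : Matrix (Fin (m + 1)) (Fin (m + 1)) ℝ) i l) ^ 2 := fun i => by ring
    rw [Finset.sum_congr rfl (fun i _ => e1 i)]
    rw [Finset.sum_add_distrib, Finset.sum_sub_distrib, hcol, ← Finset.mul_sum]
    have h2 : ∑ i, Q i l * (1 : Matrix (Fin (m + 1)) (Fin (m + 1)) ℝ) i l = d := by
      simp [Matrix.one_apply, mul_ite, hd]
    have h3 : ∑ i, ((1 : Matrix (Fin (m + 1)) (Fin (m + 1)) ℝ) i l) ^ 2 = 1 := by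
      simp [Matrix.one_apply, ]
    rw [h2, h3]; ring
  -- split B
  set S := ∑ i, ∑ j, (P i j - (1 : Matrix (Fin m) (Fin m) ℝ) i j) ^ 2 with hS
  set C := ∑ j : Fin m, (Q l (Fin.castSucc j)) ^ 2 with hC
  have hB : ∑ i, ∑ j : Fin m,
      (Q i (Fin.castSucc j) - (1 : Matrix (Fin (m + 1)) (Fin (m + 1)) ℝ) i (Fin.castSucc j)) ^ 2
      = S + C := by
    rw [Fin.sum_univ_castSucc (f := fun i => ∑ j : Fin m,
      (Q i (Fin.castSucc j) - (1 : Matrix (Fin (m + 1)) (Fin (m + 1)) ℝ) i (Fin.castSucc j)) ^ 2)]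
    congr 1
    · apply Finset.sum_congr rfl; intro i _
      apply Finset.sum_congr rfl; intro j _
      have : (1 : Matrix (Fin (m + 1)) (Fin (m + 1)) ℝ) (Fin.castSucc i) (Fin.castSucc j)
          = (1 : Matrix (Fin m) (Fin m) ℝ) i j := by
        simp [Matrix.one_apply, Fin.castSucc_inj]
      rw [this]; rfl
    · apply Finset.sum_congr rfl; intro j _
      have : (1 : Matrix (Fin (m + 1)) (Fin (m + 1)) ℝ) l (Fin.castSucc j) = 0 := by
        rw [Matrix.one_apply_ne]
        exact (Fin.castSucc_lt_last j).ne'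
      rw [this, sub_zero]
  -- row norm split : C + d^2 = 1
  have hCd : C + d ^ 2 = 1 := by
    rw [← hrow, Fin.sum_univ_castSucc (f := fun k => (Q l k) ^ 2)]
  have hdP : d = P.det := diag_last_eq_det_submatrix Q hQ hdet
  have hS0 : 0 ≤ S := Finset.sum_nonneg fun i _ => Finset.sum_nonneg fun j _ => sq_nonneg _
  have hC0 : 0 ≤ C := Finset.sum_nonneg fun j _ => sq_nonneg _
  rw [hA, hB]
  rcases eq_or_lt_of_le hm with hm1 | hm2
  · -- m = 1 : equality case
    obtain rfl : m = 1 := hm1.symm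
    have hP00 : P 0 0 = d := by rw [hdP, Matrix.det_fin_one]
    have hSval : S = (d - 1) ^ 2 := by
      rw [hS, Fin.sum_univ_one, Fin.sum_univ_one, hP00]
      norm_num [Matrix.one_apply]
    rw [hSval]
    push_cast
    nlinarith [hCd]
  · -- m ≥ 2
    have hm2' : (2 : ℝ) ≤ (m : ℝ) := by exact_mod_cast hm2
    have h4 : (4 : ℝ) ≤ (m : ℝ) ^ 2 := by nlinarith
    have hd1 : d ^ 2 ≤ 1 := by nlinarith
    have hSC : 0 ≤ S + C := add_nonneg hS0 hC0
    have hlast : 4 * (S + C) ≤ (m : ℝ) ^ 2 * (S + C) := mul_le_mul_of_nonneg_right h4 hSC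
    rcases le_or_gt 0 d with hd0 | hd0
    · -- d ≥ 0
      have hdle : d ≤ 1 := by nlinarith
      have key : 2 - 2 * d ≤ 4 * C := by
        nlinarith [mul_nonneg (sub_nonneg.mpr hdle) (by linarith : (0:ℝ) ≤ 2 + 4 * d), hCd]
      linarith [key, hS0, hlast]
    · -- d < 0 : S ≥ 1
      have hS1 : 1 ≤ S := frob_ge_one_of_det_nonpos P (by rw [← hdP]; exact hd0.le)
      have hdm1 : -1 ≤ d := by nlinarith
      linarith [hS1, hC0, hdm1, hlast]

/-- For two rotations `R₁, R₂ ∈ SO(n)` with `n ≥ 2`, the Euclidean distance of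
their last columns is controlled by `(n-1)` times the Frobenius distance of the
matrices of their first `n-1` columns, and consequently
`‖R₁ - R₂‖² ≤ n² ‖R̂₁ - R̂₂‖²` (Frobenius norms). -/
theorem rotation_last_column_estimate (n : ℕ) (hn : 2 ≤ n)
    (R₁ R₂ : Matrix (Fin n) (Fin n) ℝ)
    (h₁ : R₁ᵀ * R₁ = 1) (hd₁ : R₁.det = 1)
    (h₂ : R₂ᵀ * R₂ = 1) (hd₂ : R₂.det = 1) :
    Real.sqrt (∑ i, (R₁ i ⟨n - 1, by omega⟩ - R₂ i ⟨n - 1, by omega⟩) ^ 2) ≤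
      ((n : ℝ) - 1) *
        Real.sqrt (∑ i, ∑ j : Fin (n - 1),
          (R₁ i (Fin.castLE (by omega) j) - R₂ i (Fin.castLE (by omega) j)) ^ 2) ∧
    (∑ i, ∑ j, (R₁ i j - R₂ i j) ^ 2) ≤
      (n : ℝ) ^ 2 * ∑ i, ∑ j : Fin (n - 1),
        (R₁ i (Fin.castLE (by omega) j) - R₂ i (Fin.castLE (by omega) j)) ^ 2 := by
  obtain ⟨m, rfl⟩ : ∃ m, n = m + 1 := ⟨n - 1, by omega⟩
  have hm : 1 ≤ m := by omega
  set Q := R₂ᵀ * R₁ with hQdef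
  have hR₂R₂T : R₂ * R₂ᵀ = 1 := mul_eq_one_comm.mp h₂
  have hQorth : Qᵀ * Q = 1 := by
    rw [hQdef, Matrix.transpose_mul, Matrix.transpose_transpose, mul_assoc,
      ← mul_assoc R₂, hR₂R₂T, one_mul, h₁]
  have hQdet : Q.det = 1 := by
    rw [hQdef, Matrix.det_mul, Matrix.det_transpose, hd₂, hd₁, one_mul]
  have hR₁eq : R₂ * Q = R₁ := by rw [hQdef, ← mul_assoc, hR₂R₂T, one_mul]
  have hcol : ∀ j, ∑ i, (R₁ i j - R₂ i j) ^ 2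
      = ∑ i, (Q i j - (1 : Matrix (Fin (m + 1)) (Fin (m + 1)) ℝ) i j) ^ 2 := by
    intro j
    have hfun : (fun i => R₁ i j - R₂ i j)
        = R₂.mulVec (fun k => Q k j - (1 : Matrix (Fin (m + 1)) (Fin (m + 1)) ℝ) k j) := by
      funext i
      rw [← hR₁eq]
      simp only [Matrix.mulVec, dotProduct, Matrix.mul_apply, mul_sub,
        Finset.sum_sub_distrib]
      congr 1
      simp [Matrix.one_apply, mul_ite]
    calc ∑ i, (R₁ i j - R₂ i j) ^ 2
        = ∑ i, (R₂.mulVec (fun k => Q k j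
            - (1 : Matrix (Fin (m + 1)) (Fin (m + 1)) ℝ) k j) i) ^ 2 :=
          Finset.sum_congr rfl fun i _ => by rw [congrFun hfun i]
      _ = ∑ k, (Q k j - (1 : Matrix (Fin (m + 1)) (Fin (m + 1)) ℝ) k j) ^ 2 :=
          sum_sq_mulVec R₂ h₂ _
  set A := ∑ i, (Q i (Fin.last m)
    - (1 : Matrix (Fin (m + 1)) (Fin (m + 1)) ℝ) i (Fin.last m)) ^ 2 with hA
  set B := ∑ i, ∑ j : Fin m, (Q i (Fin.castSucc j)
    - (1 : Matrix (Fin (m + 1)) (Fin (m + 1)) ℝ) i (Fin.castSucc j)) ^ 2 with hB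
  have hkey : A ≤ (m : ℝ) ^ 2 * B := key_ineq hm Q hQorth hQdet
  have hA0 : 0 ≤ A := Finset.sum_nonneg fun i _ => sq_nonneg _
  have hB0 : 0 ≤ B := Finset.sum_nonneg fun i _ => Finset.sum_nonneg fun j _ => sq_nonneg _
  have hA' : ∑ i, (R₁ i (Fin.last m) - R₂ i (Fin.last m)) ^ 2 = A := hcol (Fin.last m)
  have hB' : ∑ i, ∑ j : Fin m,
      (R₁ i (Fin.castSucc j) - R₂ i (Fin.castSucc j)) ^ 2 = B := by
    calc ∑ i, ∑ j : Fin m, (R₁ i (Fin.castSucc j) - R₂ i (Fin.castSucc j)) ^ 2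
        = ∑ j : Fin m, ∑ i, (R₁ i (Fin.castSucc j) - R₂ i (Fin.castSucc j)) ^ 2 :=
          Finset.sum_comm
      _ = ∑ j : Fin m, ∑ i, (Q i (Fin.castSucc j)
            - (1 : Matrix (Fin (m + 1)) (Fin (m + 1)) ℝ) i (Fin.castSucc j)) ^ 2 :=
          Finset.sum_congr rfl fun j _ => hcol (Fin.castSucc j)
      _ = B := Finset.sum_comm
  have goal1 : Real.sqrt (∑ i, (R₁ i (Fin.last m) - R₂ i (Fin.last m)) ^ 2) ≤
      ((↑(m + 1) : ℝ) - 1) * Real.sqrt (∑ i, ∑ j : Fin m,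
        (R₁ i (Fin.castSucc j) - R₂ i (Fin.castSucc j)) ^ 2) := by
    rw [hA', hB']
    have : ((↑(m + 1) : ℝ) - 1) = (m : ℝ) := by push_cast; ring
    rw [this]
    calc Real.sqrt A ≤ Real.sqrt ((m : ℝ) ^ 2 * B) := Real.sqrt_le_sqrt hkey
      _ = (m : ℝ) * Real.sqrt B := by
          rw [Real.sqrt_mul (sq_nonneg _), Real.sqrt_sq (Nat.cast_nonneg m)]
  have goal2 : (∑ i, ∑ j, (R₁ i j - R₂ i j) ^ 2) ≤
      ((↑(m + 1) : ℝ)) ^ 2 * ∑ i, ∑ j : Fin m,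
        (R₁ i (Fin.castSucc j) - R₂ i (Fin.castSucc j)) ^ 2 := by
    have hsplit : (∑ i, ∑ j, (R₁ i j - R₂ i j) ^ 2)
        = (∑ i, ∑ j : Fin m, (R₁ i (Fin.castSucc j) - R₂ i (Fin.castSucc j)) ^ 2)
          + ∑ i, (R₁ i (Fin.last m) - R₂ i (Fin.last m)) ^ 2 := by
      rw [← Finset.sum_add_distrib]
      exact Finset.sum_congr rfl fun i _ => Fin.sum_univ_castSucc _
    rw [hsplit, hA', hB']
    have hcast : ((↑(m + 1) : ℝ)) = (m : ℝ) + 1 := by push_cast; ring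
    rw [hcast]
    nlinarith [hkey, hB0, Nat.cast_nonneg (α := ℝ) m]
  exact ⟨goal1, goal2⟩
end

section
/- Let H₁ and H₂ be real inner product spaces, let L : H₁ → H₂ be a continuous linear map, let f ∈ H₁, and let u₀ ∈ H₁ satisfy the weak formulation ⟨L u, L u₀⟩ = ⟨u, f⟩ for all u ∈ H₁. Define F : H₁ × H₂ → ℝ by F(u, M) := 2⟨L u, M⟩ − ‖M‖² − 2⟨u, f⟩. Then (u₀, L u₀) is a saddle point of F; more precisely: (a) F(u₀, M) ≤ F(u₀, L u₀) for every M ∈ H₂; (b) F(u, L u₀) = F(u₀, L u₀) for every u ∈ H₁; and (c) F(u₀, L u₀) = −‖L u₀‖². -/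
open RealInnerProductSpace

/-- Abstract saddle-point property of the compliance functional
`F(u, M) = 2⟪Lu, M⟫ - ‖M‖² - 2⟪u, f⟫`: if `u₀` satisfies the weak formulation
`⟪Lu, Lu₀⟫ = ⟪u, f⟫` for all `u`, then `(u₀, Lu₀)` is a saddle point of `F`, with
value `-‖Lu₀‖²`. -/
theorem compliance_saddle_point {H₁ H₂ : Type*}
    [NormedAddCommGroup H₁] [InnerProductSpace ℝ H₁]
    [NormedAddCommGroup H₂] [InnerProductSpace ℝ H₂]
    (L : H₁ →L[ℝ] H₂) (f u₀ : H₁)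
    (weak : ∀ u : H₁, ⟪L u, L u₀⟫ = ⟪u, f⟫) :
    (∀ M : H₂,
      2 * ⟪L u₀, M⟫ - ‖M‖ ^ 2 - 2 * ⟪u₀, f⟫ ≤
        2 * ⟪L u₀, L u₀⟫ - ‖L u₀‖ ^ 2 - 2 * ⟪u₀, f⟫) ∧
    (∀ u : H₁,
      2 * ⟪L u, L u₀⟫ - ‖L u₀‖ ^ 2 - 2 * ⟪u, f⟫ =
        2 * ⟪L u₀, L u₀⟫ - ‖L u₀‖ ^ 2 - 2 * ⟪u₀, f⟫) ∧
    2 * ⟪L u₀, L u₀⟫ - ‖L u₀‖ ^ 2 - 2 * ⟪u₀, f⟫ = -‖L u₀‖ ^ 2 := by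
  have hn : ⟪L u₀, L u₀⟫ = ‖L u₀‖ ^ 2 := real_inner_self_eq_norm_sq _
  have hw := weak u₀
  refine ⟨fun M => ?_, fun u => by rw [weak u, hw]; ring, by linarith⟩
  have h : (0:ℝ) ≤ ‖M - L u₀‖ ^ 2 := sq_nonneg _
  rw [← real_inner_self_eq_norm_sq, inner_sub_sub_self] at h
  rw [real_inner_self_eq_norm_sq, real_inner_comm (L u₀) M] at h
  linarith
end
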